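/- arXiv:2012.12328 — 2 statements merged into one kernel-verified Lean document; each statement's English description precedes it below -/
import Mathlib

section
/- Let K be a field, n ≥ 2, t ∈ K nonzero, and E = I_{2n} + t·e_{1,n+1} a long root element of Sp_{2n}(K). Then the conjugation word norm diameter of Sp_{2n}(K) with respect to the single normally generating element E satisfies ‖Sp_{2n}(K)‖_E ≥ 2n. -/
/-!
Every conjugate `g E^{±1} g⁻¹` differs from the identity by a matrix of rank at most one, since
`E = 1 + t e_{1,n+1}` is a transvection. As `MN - 1 = M(N - 1) + (M - 1)`, the rank of `P - 1` is
subadditive along products, so a product `P` of `k` such conjugates has `rank (P - 1) ≤ k`. The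
symplectic matrix `[[0, 1], [-1, 1]]` has no eigenvalue `1`, so it needs at least `2n` factors.
-/

open Matrix

/-- The standard symplectic form matrix `J = [[0, Iₙ], [-Iₙ, 0]]`. -/
def Jmat (n : ℕ) (R : Type*) [CommRing R] :
    Matrix (Fin n ⊕ Fin n) (Fin n ⊕ Fin n) R :=
  fromBlocks 0 1 (-1) 0

/-- `A ∈ Sp_{2n}(R)`, i.e. `AᵀJA = J`. -/
def IsSymp {n : ℕ} {R : Type*} [CommRing R]
    (A : Matrix (Fin n ⊕ Fin n) (Fin n ⊕ Fin n) R) : Prop :=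
  Aᵀ * Jmat n R * A = Jmat n R

namespace Matrix

theorem rank_add_le {K m n : Type*} [Field K] [Fintype n] (A B : Matrix m n K) :
    (A + B).rank ≤ A.rank + B.rank := by
  rw [rank, rank, rank, mulVecLin_add]
  exact (Submodule.finrank_mono (LinearMap.range_add_le _ _)).trans
    (Submodule.finrank_add_le_finrank_add_finrank _ _)

variable {K : Type*} [Field K] {m : Type*} [Fintype m] [DecidableEq m]

theorem rank_single_le_one (i j : m) (c : K) : (single i j c).rank ≤ 1 := by
  have h : single i j c = vecMulVec (Pi.single i c) (Pi.single j 1) := by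
    ext a b
    simp only [single_apply, vecMulVec_apply, Pi.single_apply]
    split_ifs <;> simp_all
  exact h ▸ rank_vecMulVec_le _ _

theorem rank_transvection_sub_one_le (i j : m) (c : K) : (transvection i j c - 1).rank ≤ 1 := by
  simpa [transvection] using rank_single_le_one i j c

theorem transvection_inv {i j : m} (h : i ≠ j) (c : K) :
    (transvection i j c)⁻¹ = transvection i j (-c) :=
  inv_eq_right_inv (by rw [transvection_mul_transvection_same i j h, add_neg_cancel,
    transvection_zero])

theorem rank_conj_sub_one {g : Matrix m m K} (hg : IsUnit g.det) (M : Matrix m m K) :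
    (g * M * g⁻¹ - 1).rank = (M - 1).rank := by
  have h : g * M * g⁻¹ - 1 = g * (M - 1) * g⁻¹ := by
    rw [mul_sub, sub_mul, mul_one, mul_nonsing_inv g hg]
  rw [h, rank_mul_eq_left_of_isUnit_det _ _ (isUnit_nonsing_inv_det g hg),
    rank_mul_eq_right_of_isUnit_det _ _ hg]

theorem rank_mul_sub_one_le (M N : Matrix m m K) :
    (M * N - 1).rank ≤ (M - 1).rank + (N - 1).rank := by
  have h : M * N - 1 = M * (N - 1) + (M - 1) := by noncomm_ring
  rw [h, add_comm (M - 1).rank]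
  exact (rank_add_le _ _).trans (Nat.add_le_add_right (rank_mul_le_right _ _) _)

theorem rank_list_prod_sub_one_le (L : List (Matrix m m K)) :
    (L.prod - 1).rank ≤ (L.map fun M => (M - 1).rank).sum := by
  induction L with
  | nil => simp
  | cons M L ih =>
    rw [List.prod_cons, List.map_cons, List.sum_cons]
    exact (rank_mul_sub_one_le M L.prod).trans (Nat.add_le_add_left ih _)

end Matrix

theorem jmat_eq_neg_J (n : ℕ) (R : Type*) [CommRing R] : Jmat n R = -J (Fin n) R := by
  simp [Jmat, J, fromBlocks_neg]

theorem isSymp_iff_mem_symplecticGroup {n : ℕ} {R : Type*} [CommRing R]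
    {A : Matrix (Fin n ⊕ Fin n) (Fin n ⊕ Fin n) R} :
    IsSymp A ↔ A ∈ symplecticGroup (Fin n) R := by
  rw [SymplecticGroup.mem_iff', IsSymp, jmat_eq_neg_J, mul_neg, neg_mul, neg_inj]

theorem IsSymp.isUnit_det {n : ℕ} {R : Type*} [CommRing R]
    {A : Matrix (Fin n ⊕ Fin n) (Fin n ⊕ Fin n) R} (hA : IsSymp A) : IsUnit A.det :=
  SymplecticGroup.symplectic_det (isSymp_iff_mem_symplecticGroup.mp hA)

theorem isSymp_fromBlocks_zero_one_neg_one_one (n : ℕ) (R : Type*) [CommRing R] :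
    IsSymp (fromBlocks 0 1 (-1) 1 : Matrix (Fin n ⊕ Fin n) (Fin n ⊕ Fin n) R) := by
  simp [IsSymp, Jmat, fromBlocks_transpose, fromBlocks_multiply]

theorem isUnit_fromBlocks_zero_one_neg_one_one_sub_one (l R : Type*) [Fintype l] [DecidableEq l]
    [CommRing R] : IsUnit (fromBlocks 0 1 (-1) 1 - 1 : Matrix (l ⊕ l) (l ⊕ l) R) := by
  have h : (fromBlocks 0 1 (-1) 1 - 1 : Matrix (l ⊕ l) (l ⊕ l) R) = fromBlocks (-1) 1 (-1) 0 := by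
    rw [← fromBlocks_one, sub_eq_add_neg, fromBlocks_neg, fromBlocks_add]
    simp
  rw [h]
  exact ⟨⟨fromBlocks (-1) 1 (-1) 0, fromBlocks 0 (-1) 1 (-1), by
    simp [fromBlocks_multiply, ← fromBlocks_one], by simp [fromBlocks_multiply, ← fromBlocks_one]⟩,
    rfl⟩

/-- The conjugation word norm of `Sp_{2n}(K)` with respect to the long root element
`E = I + t·e_{1,n+1}` has diameter at least `2n`: not every symplectic matrix is a product
of at most `2n − 1` symplectic conjugates of `E` and `E⁻¹`. -/
theorem stmt6 {K : Type*} [Field K] {n : ℕ} (hn : 2 ≤ n) (t : K)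
    (E : Matrix (Fin n ⊕ Fin n) (Fin n ⊕ Fin n) K)
    (hE : E = 1 + single (Sum.inl (⟨0, by omega⟩ : Fin n))
        (Sum.inr (⟨0, by omega⟩ : Fin n)) t) :
    ¬ ∀ A : Matrix (Fin n ⊕ Fin n) (Fin n ⊕ Fin n) K, IsSymp A →
      ∃ L : List (Matrix (Fin n ⊕ Fin n) (Fin n ⊕ Fin n) K),
        (∀ M ∈ L, ∃ g, IsSymp g ∧ (M = g * E * g⁻¹ ∨ M = g * E⁻¹ * g⁻¹)) ∧
        L.length ≤ 2 * n - 1 ∧ A = L.prod := by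
  intro h
  obtain ⟨L, hL, hlen, hprod⟩ := h _ (isSymp_fromBlocks_zero_one_neg_one_one n K)
  have hE : E = transvection _ _ t := hE
  have hfactor : ∀ M ∈ L, (M - 1).rank ≤ 1 := by
    intro M hM
    obtain ⟨g, hg, rfl | rfl⟩ := hL M hM
    · rw [rank_conj_sub_one hg.isUnit_det, hE]
      exact rank_transvection_sub_one_le _ _ _
    · rw [rank_conj_sub_one hg.isUnit_det, hE, transvection_inv Sum.inl_ne_inr]
      exact rank_transvection_sub_one_le _ _ _
  have hbound := (rank_list_prod_sub_one_le L).trans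
    (List.sum_le_card_nsmul _ 1 (by simpa using hfactor))
  rw [← hprod, rank_of_isUnit _ (isUnit_fromBlocks_zero_one_neg_one_one_sub_one _ _)] at hbound
  simp only [Fintype.card_sum, Fintype.card_fin, List.length_map, smul_eq_mul, mul_one] at hbound
  omega
end

section
/- Let R be a principal ideal domain and let A ∈ Sp_{2n}(R) with n ≥ 3. Then there exists B ∈ Sp_{2n}(R) such that A' = B⁻¹AB has upper-Hessenberg-like form in its first n×n block: a'_{i,1} = 0 for 3 ≤ i ≤ n, and more generally a'_{i,j} = 0 for 2 ≤ j+1 < i ≤ n; moreover a'_{1,1} = a_{1,1} and a'_{2,1} = gcd(a_{2,1}, a_{3,1}, …, a_{n,1}) up to multiplication by a unit of R. -/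
open Matrix

/-!
Only the upper-left block `A₁₁` of `A` matters: if `X' * X = 1` then `diag(X, X'ᵀ)` is symplectic,
and conjugating `A` by it conjugates `A₁₁` by `X`.

Over a Bézout domain, write `(x, y) = g • (a, b)` with `g = p x + q y` a gcd; then `p a + q b = 1`,
so `!![p, q; -b, a]` is invertible and sends `(x, y)` to `(g, 0)`. Applying such matrices to pairs
of coordinates clears a vector down to a single entry, and since invertible matrices preserve the
ideal generated by the entries of a vector, that entry is a gcd of the original ones. Conjugating
`A₁₁` by `diag(1, Q)`, where `Q` clears the first column below `a₂₁`, leaves `a₁₁` fixed;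
recursing on the lower-right block gives the Hessenberg form.
-/

lemma Ideal.span_range_eq_span_singleton {ι R : Type*} [CommSemiring R] {w : ι → R} {i : ι}
    (hw : ∀ k ≠ i, w k = 0) : Ideal.span (Set.range w) = Ideal.span {w i} := by
  refine le_antisymm (Ideal.span_le.2 <| Set.range_subset_iff.2 fun k => ?_)
    (Ideal.span_mono <| Set.singleton_subset_iff.2 ⟨i, rfl⟩)
  by_cases hk : k = i
  · exact hk ▸ Ideal.mem_span_singleton_self _
  · simp [hw k hk]

namespace Matrix

section Bezout

variable {ι R : Type*} [Fintype ι] [DecidableEq ι] [CommRing R]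

/-- Acts as `!![p, q; r, s]` on the coordinates `i, j` and as the identity on the others. -/
def planeMatrix (i j : ι) (p q r s : R) : Matrix ι ι R :=
  of fun k => if k = i then Pi.single i p + Pi.single j q
    else if k = j then Pi.single i r + Pi.single j s else Pi.single k 1

lemma planeMatrix_mulVec (i j : ι) (p q r s : R) (w : ι → R) :
    planeMatrix i j p q r s *ᵥ w = fun k => if k = i then p * w i + q * w j
      else if k = j then r * w i + s * w j else w k := by
  ext k
  show (fun l => planeMatrix i j p q r s k l) ⬝ᵥ w = _
  simp only [planeMatrix, of_apply]
  split_ifs <;> simp only [add_dotProduct, single_dotProduct, one_mul]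

lemma planeMatrix_mul_planeMatrix_eq_one {i j : ι} (hij : i ≠ j) {p q r s : R}
    (hdet : p * s - q * r = 1) : planeMatrix i j p q r s * planeMatrix i j s (-q) (-r) p = 1 := by
  refine ext_iff_mulVec.2 fun w => ?_
  ext k
  simp only [← mulVec_mulVec, planeMatrix_mulVec, one_mulVec, if_neg hij.symm, if_true]
  split_ifs with hki hkj
  · subst hki
    linear_combination w k * hdet
  · subst hkj
    linear_combination w k * hdet
  · rfl

omit [DecidableEq ι] in
lemma span_range_mulVec_le {κ : Type*} (Q : Matrix κ ι R) (v : ι → R) :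
    Ideal.span (Set.range (Q *ᵥ v)) ≤ Ideal.span (Set.range v) :=
  Ideal.span_le.2 <| Set.range_subset_iff.2 fun _ =>
    Ideal.sum_mem _ fun j _ => Ideal.mul_mem_left _ _ (Ideal.subset_span ⟨j, rfl⟩)

lemma span_range_mulVec (Q : GL ι R) (v : ι → R) :
    Ideal.span (Set.range ((Q : Matrix ι ι R) *ᵥ v)) = Ideal.span (Set.range v) := by
  refine le_antisymm (span_range_mulVec_le _ v) ?_
  simpa [mulVec_mulVec] using span_range_mulVec_le (↑Q⁻¹ : Matrix ι ι R) (↑Q *ᵥ v)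

variable [IsDomain R] [IsBezout R]

lemma exists_GL_mulVec_apply_eq_zero (v : ι → R) {i j : ι} (hij : i ≠ j) :
    ∃ T : GL ι R, (↑T *ᵥ v) j = 0 ∧ ∀ k, k ≠ i → k ≠ j → (↑T *ᵥ v) k = v k := by
  obtain ⟨a, ha⟩ := IsBezout.gcd_dvd_left (v i) (v j)
  obtain ⟨b, hb⟩ := IsBezout.gcd_dvd_right (v i) (v j)
  obtain ⟨p, q, hpq⟩ := IsBezout.gcd_eq_sum (v i) (v j)
  set g := IsBezout.gcd (v i) (v j)
  by_cases hg : g = 0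
  · refine ⟨1, ?_, fun k _ _ => by simp⟩
    simp [hb, hg]
  have hdet : p * a - q * -b = 1 := mul_left_cancel₀ hg <| by
    linear_combination hpq - p * ha - q * hb
  have hinv := planeMatrix_mul_planeMatrix_eq_one hij (p := a) (q := -q) (r := b) (s := p)
    (by linear_combination hdet)
  refine ⟨⟨_, _, planeMatrix_mul_planeMatrix_eq_one hij hdet, by simpa only [neg_neg] using hinv⟩,
    ?_, fun k hki hkj => ?_⟩
  · simp only [planeMatrix_mulVec, if_neg hij.symm, if_true]
    linear_combination (-b) * ha + a * hb
  · simp [planeMatrix_mulVec, hki, hkj]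

theorem exists_GL_mulVec_eq_zero_of_ne (v : ι → R) (i₀ : ι) :
    ∃ Q : GL ι R, ∀ k ≠ i₀, (↑Q *ᵥ v) k = 0 := by
  suffices ∀ (s : Finset ι) (v : ι → R), (∀ k ∉ s, k ≠ i₀ → v k = 0) →
      ∃ Q : GL ι R, ∀ k ≠ i₀, (↑Q *ᵥ v) k = 0 from
    this Finset.univ v fun k hk => absurd (Finset.mem_univ k) hk
  intro s
  induction s using Finset.induction_on with
  | empty => exact fun v hv => ⟨1, by simpa using hv⟩
  | insert j s _ ih =>
    intro v hv
    by_cases hj : j = i₀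
    · subst hj
      exact ih v fun k hk hki => hv k (by simp [hk, hki]) hki
    obtain ⟨T, hTj, hT⟩ := exists_GL_mulVec_apply_eq_zero v (Ne.symm hj)
    obtain ⟨Q, hQ⟩ := ih (↑T *ᵥ v) fun k hk hki => by
      by_cases hkj : k = j
      · rwa [hkj]
      · rw [hT k hki hkj]
        exact hv k (by simp [hk, hkj]) hki
    exact ⟨Q * T, by simpa [mulVec_mulVec] using hQ⟩

end Bezout

section Hessenberg

variable {R : Type*} [CommRing R] {n : ℕ}

def IsUpperHessenberg {α : Type*} [Zero α] (M : Matrix (Fin n) (Fin n) α) : Prop :=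
  ∀ i j : Fin n, (j : ℕ) + 1 < i → M i j = 0

lemma IsUpperHessenberg.of_submatrix_succ {α : Type*} [Zero α]
    {M : Matrix (Fin (n + 2)) (Fin (n + 2)) α}
    (h0 : ∀ i : Fin n, M i.succ.succ 0 = 0)
    (h : (M.submatrix Fin.succ Fin.succ).IsUpperHessenberg) : M.IsUpperHessenberg := by
  intro i j hij
  induction i using Fin.cases with
  | zero => simp at hij
  | succ i =>
    induction j using Fin.cases with
    | zero =>
      induction i using Fin.cases with
      | zero => simp at hij
      | succ i => exact h0 i
    | succ j => exact h i j (by simpa using hij)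

/-- The block diagonal matrix `diag(1, Q)`. -/
def blockDiagOne : Matrix (Fin n) (Fin n) R →* Matrix (Fin (n + 1)) (Fin (n + 1)) R where
  toFun Q := of (Fin.cons (Fin.cons 1 0) fun i => Fin.cons 0 (Q i))
  map_one' := by
    ext i j
    induction i using Fin.cases <;> induction j using Fin.cases <;>
      simp [one_apply, Fin.succ_ne_zero, (Fin.succ_ne_zero _).symm]
  map_mul' Q Q' := by
    ext i j
    induction i using Fin.cases <;> induction j using Fin.cases <;>
      simp [mul_apply, Fin.sum_univ_succ]

@[simp] lemma blockDiagOne_zero_zero (Q : Matrix (Fin n) (Fin n) R) : blockDiagOne Q 0 0 = 1 := rfl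

@[simp] lemma blockDiagOne_zero_succ (Q : Matrix (Fin n) (Fin n) R) (j : Fin n) :
    blockDiagOne Q 0 j.succ = 0 := rfl

@[simp] lemma blockDiagOne_succ_zero (Q : Matrix (Fin n) (Fin n) R) (i : Fin n) :
    blockDiagOne Q i.succ 0 = 0 := rfl

@[simp] lemma blockDiagOne_succ_succ (Q : Matrix (Fin n) (Fin n) R) (i j : Fin n) :
    blockDiagOne Q i.succ j.succ = Q i j := rfl

lemma blockDiagOne_mulVec_succ (Q : Matrix (Fin n) (Fin n) R) (w : Fin (n + 1) → R) (i : Fin n) :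
    (blockDiagOne Q *ᵥ w) i.succ = (Q *ᵥ Fin.tail w) i := by
  simp [mulVec, dotProduct, Fin.sum_univ_succ, Fin.tail]

section Conj

variable (Q Q' : Matrix (Fin n) (Fin n) R) (M : Matrix (Fin (n + 1)) (Fin (n + 1)) R)

lemma blockDiagOne_mul_mul_blockDiagOne_zero_zero :
    (blockDiagOne Q * M * blockDiagOne Q') 0 0 = M 0 0 := by
  simp [mul_apply, Fin.sum_univ_succ]

lemma blockDiagOne_mul_mul_blockDiagOne_succ_zero (i : Fin n) :
    (blockDiagOne Q * M * blockDiagOne Q') i.succ 0 = (Q *ᵥ fun k => M k.succ 0) i := by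
  simp [mul_apply, Fin.sum_univ_succ, mulVec, dotProduct]

lemma submatrix_blockDiagOne_mul_mul_blockDiagOne :
    (blockDiagOne Q * M * blockDiagOne Q').submatrix Fin.succ Fin.succ =
      Q * M.submatrix Fin.succ Fin.succ * Q' := by
  ext i j
  simp [mul_apply, Fin.sum_univ_succ, Finset.sum_mul]

end Conj

variable [IsDomain R] [IsBezout R]

theorem exists_isUpperHessenberg_blockDiagOne_conj (M : Matrix (Fin (n + 1)) (Fin (n + 1)) R) :
    ∃ P : GL (Fin n) R, (blockDiagOne ↑P⁻¹ * M * blockDiagOne ↑P).IsUpperHessenberg := by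
  induction n with
  | zero => exact ⟨1, fun i j hij => by omega⟩
  | succ n ih =>
    obtain ⟨Q, hQ⟩ := exists_GL_mulVec_eq_zero_of_ne (fun k : Fin (n + 1) => M k.succ 0) 0
    obtain ⟨P, hP⟩ :=
      ih ((Q : Matrix _ _ R) * M.submatrix Fin.succ Fin.succ * (↑(Q⁻¹) : Matrix _ _ R))
    refine ⟨Q⁻¹ * Units.map blockDiagOne P, .of_submatrix_succ (fun i => ?_) ?_⟩
    · simp only [blockDiagOne_mul_mul_blockDiagOne_succ_zero, _root_.mul_inv_rev, _root_.inv_inv,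
        Units.val_mul, Units.coe_map_inv]
      rw [← mulVec_mulVec, blockDiagOne_mulVec_succ]
      have hQcol : Fin.tail ((Q : Matrix (Fin (n + 1)) (Fin (n + 1)) R) *ᵥ fun k => M k.succ 0) = 0 :=
        funext fun k => hQ k.succ (Fin.succ_ne_zero k)
      simp [hQcol]
    · simp only [submatrix_blockDiagOne_mul_mul_blockDiagOne, _root_.mul_inv_rev, _root_.inv_inv,
        Units.val_mul, Units.coe_map_inv, Units.coe_map]
      simpa only [Matrix.mul_assoc] using hP

theorem exists_isUpperHessenberg_conj (M : Matrix (Fin (n + 2)) (Fin (n + 2)) R) :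
    ∃ X X' : Matrix (Fin (n + 2)) (Fin (n + 2)) R, X' * X = 1 ∧
      (X' * M * X).IsUpperHessenberg ∧ (X' * M * X) 0 0 = M 0 0 ∧
      Ideal.span {(X' * M * X) 1 0} = Ideal.span (Set.range fun i : Fin (n + 1) => M i.succ 0) := by
  obtain ⟨P, hP⟩ := exists_isUpperHessenberg_blockDiagOne_conj M
  refine ⟨_, _, by rw [← map_mul, P.inv_mul, map_one], hP,
    blockDiagOne_mul_mul_blockDiagOne_zero_zero _ _ _, ?_⟩
  refine (Ideal.span_range_eq_span_singleton (i := 0) fun (k : Fin (n + 1)) hk =>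
    hP k.succ 0 (Nat.succ_lt_succ (Fin.pos_of_ne_zero hk))).symm.trans ?_
  rw [funext (blockDiagOne_mul_mul_blockDiagOne_succ_zero _ _ M), span_range_mulVec]

end Hessenberg

section Blocks

variable {m ι R : Type*} [Fintype m] [Fintype ι] [DecidableEq m] [DecidableEq ι] [CommRing R]

lemma toBlocks₁₁_inv_fromBlocks_mul_mul_fromBlocks {X X' : Matrix m m R} {Y Y' : Matrix ι ι R}
    (hX : X' * X = 1) (hY : Y' * Y = 1) (A : Matrix (m ⊕ ι) (m ⊕ ι) R) :
    ((fromBlocks X 0 0 Y)⁻¹ * A * fromBlocks X 0 0 Y).toBlocks₁₁ = X' * A.toBlocks₁₁ * X := by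
  have hinv : (fromBlocks X 0 0 Y)⁻¹ = fromBlocks X' 0 0 Y' :=
    inv_eq_left_inv <| by simp [fromBlocks_multiply, hX, hY]
  rw [hinv, ← fromBlocks_toBlocks A]
  simp [fromBlocks_multiply]

end Blocks

end Matrix

lemma Fin.setOf_exists_one_le_eq_range_succ {α : Type*} {n : ℕ} (f : Fin (n + 1) → α) :
    {x | ∃ i : Fin (n + 1), 1 ≤ (i : ℕ) ∧ x = f i} = Set.range fun i : Fin n => f i.succ := by
  ext x
  constructor
  · rintro ⟨i, hi, rfl⟩
    induction i using Fin.cases with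
    | zero => simp at hi
    | succ i => exact ⟨i, rfl⟩
  · rintro ⟨i, rfl⟩
    exact ⟨i.succ, by simp, rfl⟩

lemma isSymp_fromBlocks_transpose {R : Type*} [CommRing R] {n : ℕ}
    {X X' : Matrix (Fin n) (Fin n) R} (h : X' * X = 1) : IsSymp (fromBlocks X 0 0 X'ᵀ) := by
  have h' : Xᵀ * X'ᵀ = 1 := by rw [← transpose_mul, h, transpose_one]
  simp [IsSymp, Jmat, fromBlocks_transpose, fromBlocks_multiply, h, h']

/-- First Hessenberg form: every `A ∈ Sp_{2n}(R)` over a PID is symplectically conjugate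
to a matrix `A' = B⁻¹AB` whose upper-left `n×n` block is upper Hessenberg, with
`a'_{1,1} = a_{1,1}` and `a'_{2,1}` a gcd of `a_{2,1}, …, a_{n,1}` up to units (expressed
as an equality of the generated ideals). -/
theorem stmt8 {R : Type*} [CommRing R] [IsDomain R] [IsPrincipalIdealRing R]
    {n : ℕ} (hn : 3 ≤ n)
    (A : Matrix (Fin n ⊕ Fin n) (Fin n ⊕ Fin n) R) :
    ∃ B : Matrix (Fin n ⊕ Fin n) (Fin n ⊕ Fin n) R, IsSymp B ∧
      (∀ i j : Fin n, (j : ℕ) + 1 < (i : ℕ) → (B⁻¹ * A * B) (Sum.inl i) (Sum.inl j) = 0) ∧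
      (B⁻¹ * A * B) (Sum.inl ⟨0, by omega⟩) (Sum.inl ⟨0, by omega⟩) =
        A (Sum.inl ⟨0, by omega⟩) (Sum.inl ⟨0, by omega⟩) ∧
      Ideal.span {(B⁻¹ * A * B) (Sum.inl ⟨1, by omega⟩) (Sum.inl ⟨0, by omega⟩)} =
        Ideal.span {x : R | ∃ i : Fin n, 1 ≤ (i : ℕ) ∧ x = A (Sum.inl i) (Sum.inl ⟨0, by omega⟩)} := by
  obtain ⟨m, rfl⟩ : ∃ m, n = m + 2 := ⟨n - 2, by omega⟩
  obtain ⟨X, X', hX, hHess, h00, h10⟩ := exists_isUpperHessenberg_conj A.toBlocks₁₁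
  have hB : ∀ i j, ((fromBlocks X 0 0 X'ᵀ)⁻¹ * A * fromBlocks X 0 0 X'ᵀ) (Sum.inl i) (Sum.inl j) =
      (X' * A.toBlocks₁₁ * X) i j := fun i j =>
    congr_fun₂ (toBlocks₁₁_inv_fromBlocks_mul_mul_fromBlocks hX
      (by rw [← transpose_mul, hX, transpose_one]) A) i j
  refine ⟨fromBlocks X 0 0 X'ᵀ, isSymp_fromBlocks_transpose hX,
    fun i j hij => (hB i j).trans (hHess i j hij), (hB _ _).trans h00, ?_⟩
  rw [hB, Fin.setOf_exists_one_le_eq_range_succ]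
  exact h10
end
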